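/- Let u, v, x, y ∈ R^n \ {0} and let M = X_{2n} N X_{2n}, where N has zero diagonal blocks and off-diagonal blocks V^T = v u^T (upper right) and W = x y^T (lower left), with V·1_n = W·1_n = 0. If u^T x = 0 and y^T v = 0, then M^2 = 0. If exactly one of u^T x, y^T v is zero, then M^4 = 0 and M^2 has rank at most 1. If both are nonzero, then M^2 has the nonzero eigenvalue (u^T x)(y^T v), with eigenvector X_{2n}(v, 0_n)^T. -/
import Mathlib


open Matrix BigOperators

def Jmat (n : ℕ) : Matrix (Fin n) (Fin n) ℝ :=
  Matrix.of fun i j => if j = i.rev then 1 else 0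

noncomputable def Xmat (n : ℕ) : Matrix (Fin n ⊕ Fin n) (Fin n ⊕ Fin n) ℝ :=
  (Real.sqrt 2)⁻¹ • Matrix.fromBlocks 1 (Jmat n) (Jmat n) (-1)

lemma Jmat_sq (n : ℕ) : Jmat n * Jmat n = 1 := by
  ext i j
  simp only [Jmat, Matrix.mul_apply, Matrix.of_apply, Matrix.one_apply]
  rw [Finset.sum_eq_single i.rev (fun b _ hb => by simp [hb]) (by simp)]
  by_cases h : i = j <;> simp [h, Fin.rev_rev, Fin.rev_inj, eq_comm]

lemma Xmat_sq (n : ℕ) : Xmat n * Xmat n = 1 := by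
  have h2 : (Real.sqrt 2)⁻¹ * (Real.sqrt 2)⁻¹ = (2 : ℝ)⁻¹ := by
    rw [← mul_inv]
    norm_num [Real.mul_self_sqrt]
  rw [Xmat, Matrix.smul_mul, Matrix.mul_smul, smul_smul, h2,
    Matrix.fromBlocks_multiply]
  have hA : (1 : Matrix (Fin n) (Fin n) ℝ) * 1 + Jmat n * Jmat n = (2:ℝ) • 1 := by
    rw [Jmat_sq, Matrix.one_mul, two_smul]
  have hB : (1 : Matrix (Fin n) (Fin n) ℝ) * Jmat n + Jmat n * (-1) = 0 := by simp
  have hC : Jmat n * 1 + (-1) * Jmat n = 0 := by simp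
  have hD : Jmat n * Jmat n + (-1) * (-1 : Matrix (Fin n) (Fin n) ℝ) = (2:ℝ) • 1 := by
    rw [Jmat_sq]; simp [two_smul]
  rw [hA, hB, hC, hD]
  ext i j
  rcases i with i | i <;> rcases j with j | j <;>
    simp [Matrix.fromBlocks, Matrix.one_apply, smul_smul] <;>
    by_cases h : i = j <;> norm_num [h]

lemma vmv_mul {n : ℕ} (a b c d : Fin n → ℝ) :
    Matrix.vecMulVec a b * Matrix.vecMulVec c d = (b ⬝ᵥ c) • Matrix.vecMulVec a d := by
  ext i j
  simp only [Matrix.mul_apply, Matrix.vecMulVec_apply, Matrix.smul_apply, smul_eq_mul,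
    dotProduct]
  rw [Finset.sum_mul]
  exact Finset.sum_congr rfl fun k _ => by ring

lemma vmv_mulVec {n : ℕ} (a b c : Fin n → ℝ) :
    Matrix.vecMulVec a b *ᵥ c = (b ⬝ᵥ c) • a := by
  ext i
  simp only [Matrix.mulVec, Matrix.vecMulVec_apply, dotProduct, Pi.smul_apply, smul_eq_mul]
  rw [Finset.sum_mul]
  exact Finset.sum_congr rfl fun k _ => by ring

lemma rank_vmv_le {m : Type*} [Fintype m] [DecidableEq m] (a b : m → ℝ) :
    (Matrix.vecMulVec a b).rank ≤ 1 := by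
  rw [Matrix.vecMulVec_eq (Fin 1)]
  exact (Matrix.rank_mul_le_right _ _).trans
    ((Matrix.rank_le_card_height _).trans (by simp))

theorem rank_one_blocks_alternative (n : ℕ) (u v x y : Fin n → ℝ)
    (hu : u ≠ 0) (hv : v ≠ 0) (hx : x ≠ 0) (hy : y ≠ 0)
    (V W : Matrix (Fin n) (Fin n) ℝ)
    (hV : V = Matrix.vecMulVec u v) (hW : W = Matrix.vecMulVec x y)
    (hV1 : V *ᵥ (fun _ => (1:ℝ)) = 0) (hW1 : W *ᵥ (fun _ => (1:ℝ)) = 0)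
    (M : Matrix (Fin n ⊕ Fin n) (Fin n ⊕ Fin n) ℝ)
    (hM : M = Xmat n * Matrix.fromBlocks 0 Vᵀ W 0 * Xmat n) :
    (u ⬝ᵥ x = 0 → y ⬝ᵥ v = 0 → M ^ 2 = 0) ∧
    ((u ⬝ᵥ x = 0 ∧ y ⬝ᵥ v ≠ 0) ∨ (u ⬝ᵥ x ≠ 0 ∧ y ⬝ᵥ v = 0) →
      M ^ 4 = 0 ∧ (M ^ 2).rank ≤ 1) ∧
    (u ⬝ᵥ x ≠ 0 → y ⬝ᵥ v ≠ 0 →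
      (u ⬝ᵥ x) * (y ⬝ᵥ v) ≠ 0 ∧
      (M ^ 2) *ᵥ (Xmat n *ᵥ Sum.elim v 0) =
        ((u ⬝ᵥ x) * (y ⬝ᵥ v)) • (Xmat n *ᵥ Sum.elim v 0)) := by
  set N : Matrix (Fin n ⊕ Fin n) (Fin n ⊕ Fin n) ℝ := Matrix.fromBlocks 0 Vᵀ W 0 with hN
  have hVt : Vᵀ = Matrix.vecMulVec v u := by
    rw [hV]; ext i j; simp [Matrix.vecMulVec_apply, mul_comm]
  have hNN : N * N = Matrix.fromBlocks ((u ⬝ᵥ x) • Matrix.vecMulVec v y) 0 0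
      ((y ⬝ᵥ v) • Matrix.vecMulVec x u) := by
    rw [hN, Matrix.fromBlocks_multiply]
    simp only [Matrix.zero_mul, Matrix.mul_zero, zero_add, add_zero]
    rw [hVt, hW, vmv_mul, vmv_mul]
  have hM2 : M ^ 2 = Xmat n * (N * N) * Xmat n := by
    rw [pow_two, hM]
    calc Xmat n * N * Xmat n * (Xmat n * N * Xmat n)
        = Xmat n * N * (Xmat n * Xmat n) * N * Xmat n := by simp only [mul_assoc]
      _ = Xmat n * (N * N) * Xmat n := by rw [Xmat_sq]; simp only [mul_one, mul_assoc]
  refine ⟨?_, ?_, ?_⟩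
  · intro h1 h2
    rw [hM2, hNN, h1, h2]
    simp
  · intro hcase
    have hM4 : M ^ 4 = Xmat n * ((N * N) * (N * N)) * Xmat n := by
      have : M ^ 4 = M ^ 2 * M ^ 2 := by rw [← pow_add]
      rw [this, hM2]
      calc Xmat n * (N * N) * Xmat n * (Xmat n * (N * N) * Xmat n)
          = Xmat n * (N * N) * (Xmat n * Xmat n) * (N * N) * Xmat n := by
            simp only [mul_assoc]
        _ = Xmat n * ((N * N) * (N * N)) * Xmat n := by
            rw [Xmat_sq]; simp only [mul_one, mul_assoc]
    have hsq : (N * N) * (N * N) = 0 := by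
      rw [hNN, Matrix.fromBlocks_multiply]
      simp only [Matrix.zero_mul, Matrix.mul_zero, zero_add, add_zero,
        Matrix.smul_mul, Matrix.mul_smul, vmv_mul, smul_smul]
      rcases hcase with ⟨h1, _⟩ | ⟨_, h2⟩
      · rw [h1]; simp
      · rw [h2]; simp
    constructor
    · rw [hM4, hsq]; simp
    · rw [hM2]
      refine (Matrix.rank_mul_le_left _ _).trans ((Matrix.rank_mul_le_right _ _).trans ?_)
      rcases hcase with ⟨h1, _⟩ | ⟨_, h2⟩
      · rw [hNN, h1]
        have : Matrix.fromBlocks (0 : Matrix (Fin n) (Fin n) ℝ) 0 0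
            ((y ⬝ᵥ v) • Matrix.vecMulVec x u) =
            Matrix.vecMulVec (Sum.elim 0 ((y ⬝ᵥ v) • x)) (Sum.elim 0 u) := by
          ext i j
          rcases i with i | i <;> rcases j with j | j <;>
            simp [Matrix.vecMulVec_apply, mul_assoc]
        rw [zero_smul, this]
        exact rank_vmv_le _ _
      · rw [hNN, h2]
        have : Matrix.fromBlocks ((u ⬝ᵥ x) • Matrix.vecMulVec v y) 0 0
            ((0:ℝ) • Matrix.vecMulVec x u) =
            Matrix.vecMulVec (Sum.elim ((u ⬝ᵥ x) • v) 0) (Sum.elim y 0) := by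
          ext i j
          rcases i with i | i <;> rcases j with j | j <;>
            simp [Matrix.vecMulVec_apply, mul_assoc]
        rw [this]
        exact rank_vmv_le _ _
  · intro h1 h2
    refine ⟨mul_ne_zero h1 h2, ?_⟩
    rw [hM2]
    have key : (N * N) *ᵥ Sum.elim v 0 = ((u ⬝ᵥ x) * (y ⬝ᵥ v)) • Sum.elim v 0 := by
      rw [hNN]
      ext i
      rcases i with i | i
      · simp only [Matrix.fromBlocks_mulVec, Sum.elim_inl, Matrix.mulVec_zero,
          Matrix.zero_mulVec, add_zero, Matrix.smul_mulVec, vmv_mulVec,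
          Pi.smul_apply, smul_eq_mul, Sum.elim_comp_inl]
        ring
      · simp [Matrix.fromBlocks_mulVec, Matrix.smul_mulVec, vmv_mulVec]
    calc (Xmat n * (N * N) * Xmat n) *ᵥ (Xmat n *ᵥ Sum.elim v 0)
        = (Xmat n * (N * N) * (Xmat n * Xmat n)) *ᵥ Sum.elim v 0 := by
          rw [Matrix.mulVec_mulVec, mul_assoc]
      _ = Xmat n *ᵥ ((N * N) *ᵥ Sum.elim v 0) := by
          rw [Xmat_sq, mul_one, ← Matrix.mulVec_mulVec]
      _ = ((u ⬝ᵥ x) * (y ⬝ᵥ v)) • (Xmat n *ᵥ Sum.elim v 0) := by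
          rw [key, Matrix.mulVec_smul]
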